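/- Let (X,x₀) be a pointed topological space, n ≥ 1 and m ∈ ℕ. Let f_1,…,f_m and f′_1,…,f′_m be continuous pointed maps with f_k, f′_k : (S_k^n, θ) → (X, x₀) and f_k homotopic to f′_k relative to {θ} for k = 1,…,m, and let g, g′ : (⋁̃_{k≥m+1} S_k^n, θ) → (X, x₀) be continuous maps that are homotopic relative to {θ}, where ⋁̃_{k≥m+1} S_k^n is the subspace of ℍ^n consisting of the spheres S_k^n with k ≥ m+1. Then the maps f, f′ : (ℍ^n, θ) → (X, x₀) defined by f|_{S_k^n} = f_k, f′|_{S_k^n} = f′_k for k ≤ m and f|_{⋁̃_{k≥m+1}S_k^n} = g, f′|_{⋁̃_{k≥m+1}S_k^n} = g′ are continuous and homotopic relative to {θ}. -/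

import Mathlib

open scoped unitInterval Topology Topology.Homotopy

noncomputable section

namespace HG

/-- The `k`-th `n`-sphere `Sₖⁿ` (of radius `1/(k+1)`) of the `n`-dimensional Hawaiian
earring, as a subset of `ℝ^{n+1}`. -/
def sphereSet (n k : ℕ) : Set (EuclideanSpace ℝ (Fin (n+1))) :=
  {r | (r 0 - 1/(k+1))^2 + ∑ i ∈ Finset.univ.erase (0 : Fin (n+1)), (r i)^2 = (1/(k+1))^2}

/-- The `n`-dimensional Hawaiian earring
`ℍⁿ = {r ∈ ℝ^{n+1} | (r₀ - 1/k)² + ∑_{i=1}^n rᵢ² = (1/k)², some k ∈ ℕ}`. -/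
def hawaiianSet (n : ℕ) : Set (EuclideanSpace ℝ (Fin (n+1))) :=
  ⋃ k : ℕ, sphereSet n k

/-- The base point `θ = (0, …, 0)` of the Hawaiian earring. -/
def theta (n : ℕ) : EuclideanSpace ℝ (Fin (n+1)) := 0

theorem theta_mem_sphereSet (n k : ℕ) : theta n ∈ sphereSet n k := by
  simp [sphereSet, theta]

theorem sphereSet_subset (n k : ℕ) : sphereSet n k ⊆ hawaiianSet n :=
  Set.subset_iUnion (sphereSet n) k

/-- `θ` as a point of the subspace `ℍⁿ`. -/
def thetaPt (n : ℕ) : ↥(hawaiianSet n) :=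
  ⟨theta n, sphereSet_subset n 0 (theta_mem_sphereSet n 0)⟩

/-- The "tail" `⋁̃_{k ≥ m} Sₖⁿ` of the Hawaiian earring: the union of all the spheres
`Sₖⁿ` with index `k ≥ m`, as a subspace of `ℍⁿ`. -/
def tailSet (n m : ℕ) : Set (EuclideanSpace ℝ (Fin (n+1))) :=
  ⋃ k : ℕ, ⋃ (_ : m ≤ k), sphereSet n k

theorem tailSet_subset (n m : ℕ) : tailSet n m ⊆ hawaiianSet n := by
  intro r hr
  rcases Set.mem_iUnion.mp hr with ⟨k, hk⟩
  rcases Set.mem_iUnion.mp hk with ⟨-, h⟩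
  exact sphereSet_subset n k h

theorem theta_mem_tailSet (n m : ℕ) : theta n ∈ tailSet n m :=
  Set.mem_iUnion.mpr ⟨m, Set.mem_iUnion.mpr ⟨le_rfl, theta_mem_sphereSet n m⟩⟩

/-!
A point `r` of `Sₖⁿ` satisfies `(k + 1) ‖r‖² = 2 r₀`. Hence two distinct spheres meet only in
`θ`, and on `ℍⁿ` the tail `⋁̃_{k ≥ m} Sₖⁿ` is cut out by the closed condition
`(m + 1) ‖r‖² ≤ 2 r₀`. So `ℍⁿ` is covered by the finitely many closed sets `S₀ⁿ, …, S_{m-1}ⁿ` and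
the tail, any two of which meet only in `θ`. The given homotopies all stay at `x₀` over `θ`,
so they paste to a continuous map on `ℍⁿ × I`; its two ends agree with `f` and `f'` piece by
piece, which also makes `f` and `f'` continuous.
-/

section Gluing

variable {ι α β : Type*} [TopologicalSpace α] [TopologicalSpace β] {S : ι → Set α}

theorem _root_.LocallyFinite.continuous_liftCover (hS : LocallyFinite S)
    (hcl : ∀ i, IsClosed (S i)) {F : ∀ i, S i → β} (hF : ∀ i, Continuous (F i))
    {hcomp : ∀ i j x (hxi : x ∈ S i) (hxj : x ∈ S j), F i ⟨x, hxi⟩ = F j ⟨x, hxj⟩}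
    {hcov : ⋃ i, S i = Set.univ} :
    Continuous (Set.liftCover S F hcomp hcov) := by
  refine hS.continuous hcov hcl fun i => continuousOn_iff_continuous_domRestrict.mpr ?_
  convert hF i using 1
  funext x
  exact Set.liftCover_coe x

theorem _root_.LocallyFinite.exists_continuous_prod_glue {Z : Type*} [TopologicalSpace Z]
    (hS : LocallyFinite S) (hcl : ∀ i, IsClosed (S i)) (hcov : ⋃ i, S i = Set.univ)
    (K : ∀ i, S i × Z → β) (hK : ∀ i, Continuous (K i))
    (hcomp : ∀ i j x (hxi : x ∈ S i) (hxj : x ∈ S j) z, K i (⟨x, hxi⟩, z) = K j (⟨x, hxj⟩, z)) :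
    ∃ H : α × Z → β, Continuous H ∧ ∀ i x (hx : x ∈ S i) z, H (x, z) = K i (⟨x, hx⟩, z) := by
  refine ⟨Set.liftCover (fun i => S i ×ˢ Set.univ) (fun i p => K i (⟨p.1.1, p.2.1⟩, p.1.2))
      (fun i j p hi hj => hcomp i j _ hi.1 hj.1 _)
      (by rw [← Set.iUnion_prod_const, hcov, Set.univ_prod_univ]),
    (hS.prod_right _).continuous_liftCover (fun i => (hcl i).prod isClosed_univ)
      (fun i => (hK i).comp (by fun_prop)),
    fun i x hx z => Set.liftCover_of_mem (S := fun i => S i ×ˢ Set.univ) (i := i) ⟨hx, trivial⟩⟩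

end Gluing

section Geometry

variable {n : ℕ}

theorem mem_sphereSet_iff {k : ℕ} {r : EuclideanSpace ℝ (Fin (n+1))} :
    r ∈ sphereSet n k ↔ (k + 1) * ‖r‖ ^ 2 = 2 * r 0 := by
  have hnorm : ‖r‖ ^ 2 = r 0 ^ 2 + ∑ i ∈ Finset.univ.erase 0, r i ^ 2 := by
    simp [EuclideanSpace.norm_sq_eq]
  have hk : (k + 1 : ℝ) ≠ 0 := by positivity
  rw [sphereSet, Set.mem_ofPred_eq, hnorm]
  constructor <;> intro h
  · field_simp at h
    apply mul_left_cancel₀ hk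
    linear_combination h
  · field_simp
    linear_combination (k + 1 : ℝ) * h

theorem isClosed_sphereSet (k : ℕ) : IsClosed (sphereSet n k) := by
  have : sphereSet n k = {r | (k + 1) * ‖r‖ ^ 2 = 2 * r 0} := Set.ext fun _ => mem_sphereSet_iff
  rw [this]
  exact isClosed_eq (by fun_prop) (by fun_prop)

theorem eq_theta_of_mem_sphereSet_of_mem_sphereSet {k j : ℕ}
    {r : EuclideanSpace ℝ (Fin (n+1))} (hkj : k ≠ j) (hk : r ∈ sphereSet n k)
    (hj : r ∈ sphereSet n j) : r = theta n := by
  rw [mem_sphereSet_iff] at hk hj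
  rcases mul_eq_mul_right_iff.mp (hk.trans hj.symm) with h | h
  · exact absurd (by exact_mod_cast add_right_cancel h) hkj
  · simpa [theta] using h

theorem mem_tailSet_iff_of_mem_sphereSet {m k : ℕ} {r : EuclideanSpace ℝ (Fin (n+1))}
    (hk : r ∈ sphereSet n k) : r ∈ tailSet n m ↔ (m + 1) * ‖r‖ ^ 2 ≤ 2 * r 0 := by
  constructor
  · intro h
    obtain ⟨j, hj, hr⟩ : ∃ j, m ≤ j ∧ r ∈ sphereSet n j := by simpa [tailSet] using h
    rw [← mem_sphereSet_iff.mp hr]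
    gcongr
  · intro h
    rw [← mem_sphereSet_iff.mp hk] at h
    rcases eq_or_ne r 0 with rfl | hr
    · exact theta_mem_tailSet n m
    · have hmk : m ≤ k := by
        exact_mod_cast le_of_add_le_add_right (le_of_mul_le_mul_right h (by positivity))
      exact Set.mem_iUnion₂.mpr ⟨k, hmk, hk⟩

theorem eq_theta_of_mem_sphereSet_of_mem_tailSet {m k : ℕ} {r : EuclideanSpace ℝ (Fin (n+1))}
    (hkm : k < m) (hk : r ∈ sphereSet n k) (hm : r ∈ tailSet n m) : r = theta n := by
  obtain ⟨j, hj, hr⟩ : ∃ j, m ≤ j ∧ r ∈ sphereSet n j := by simpa [tailSet] using hm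
  exact eq_theta_of_mem_sphereSet_of_mem_sphereSet (by omega) hk hr

theorem isClosed_preimage_val_tailSet (m : ℕ) :
    IsClosed (Subtype.val ⁻¹' tailSet n m : Set (hawaiianSet n)) := by
  convert isClosed_le (f := fun x : hawaiianSet n => (m + 1) * ‖x.1‖ ^ 2)
    (g := fun x => 2 * x.1 0) (by fun_prop) (by fun_prop) using 1
  ext x
  obtain ⟨k, hk⟩ := Set.mem_iUnion.mp x.2
  exact mem_tailSet_iff_of_mem_sphereSet hk

def wedgePiece (n m : ℕ) : Option (Fin m) → Set (EuclideanSpace ℝ (Fin (n+1)))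
  | none => tailSet n m
  | some k => sphereSet n k

theorem exists_mem_wedgePiece (m : ℕ) (x : hawaiianSet n) :
    ∃ i, (x : EuclideanSpace ℝ (Fin (n+1))) ∈ wedgePiece n m i := by
  obtain ⟨k, hk⟩ := Set.mem_iUnion.mp x.2
  by_cases hkm : k < m
  · exact ⟨some ⟨k, hkm⟩, hk⟩
  · exact ⟨none, Set.mem_iUnion₂.mpr ⟨k, not_lt.mp hkm, hk⟩⟩

theorem isClosed_preimage_val_wedgePiece {m : ℕ} :
    ∀ i, IsClosed (Subtype.val ⁻¹' wedgePiece n m i : Set (hawaiianSet n))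
  | none => isClosed_preimage_val_tailSet m
  | some k => (isClosed_sphereSet k).preimage continuous_subtype_val

theorem eq_theta_of_mem_wedgePiece {m : ℕ} {r : EuclideanSpace ℝ (Fin (n+1))} :
    ∀ {i j : Option (Fin m)}, i ≠ j → r ∈ wedgePiece n m i → r ∈ wedgePiece n m j → r = theta n
  | none, none, h, _, _ => absurd rfl h
  | none, some k, _, hi, hj => eq_theta_of_mem_sphereSet_of_mem_tailSet k.2 hj hi
  | some k, none, _, hi, hj => eq_theta_of_mem_sphereSet_of_mem_tailSet k.2 hi hj
  | some _, some _, h, hi, hj =>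
    eq_theta_of_mem_sphereSet_of_mem_sphereSet (fun e => h (congrArg _ (Fin.ext e))) hi hj

theorem exists_continuous_glue_wedgePiece {m : ℕ} {X Z : Type*} [TopologicalSpace X]
    [TopologicalSpace Z] (x₀ : X) (L : ∀ i, ↥(wedgePiece n m i) × Z → X)
    (hL : ∀ i, Continuous (L i))
    (hLθ : ∀ i (hθ : theta n ∈ wedgePiece n m i) z, L i (⟨theta n, hθ⟩, z) = x₀) :
    ∃ H : ↥(hawaiianSet n) × Z → X, Continuous H ∧
      ∀ i (s : hawaiianSet n) (hs : (s : EuclideanSpace ℝ (Fin (n+1))) ∈ wedgePiece n m i) z,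
        H (s, z) = L i (⟨s, hs⟩, z) := by
  refine (locallyFinite_of_finite _).exists_continuous_prod_glue
    isClosed_preimage_val_wedgePiece
    (Set.eq_univ_of_forall fun x => Set.mem_iUnion.mpr (exists_mem_wedgePiece m x))
    (fun i p => L i (⟨p.1.1.1, p.1.2⟩, p.2)) (fun i => (hL i).comp (by fun_prop)) ?_
  rintro i j ⟨r, -⟩ hi hj z
  rcases eq_or_ne i j with rfl | hij
  · rfl
  · obtain rfl := eq_theta_of_mem_wedgePiece hij hi hj
    exact (hLθ i hi z).trans (hLθ j hj z).symm

end Geometry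

theorem hawaiian_glued_homotopic_of_finitely_many_general
    (n : ℕ) (m : ℕ) (X : Type*) [TopologicalSpace X] (x₀ : X)
    (fk f'k : ∀ k : ℕ, ↥(sphereSet n k) → X)
    -- each `fₖ` is homotopic to `f'ₖ` rel `{θ}` :
    (hhtpk : ∀ k, k < m → ∃ K : ↥(sphereSet n k) × I → X, Continuous K ∧
      (∀ s, K (s, 0) = fk k s) ∧ (∀ s, K (s, 1) = f'k k s) ∧
      (∀ t : I, K (⟨theta n, theta_mem_sphereSet n k⟩, t) = x₀))
    (g g' : ↥(tailSet n m) → X)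
    -- `g` and `g'` are homotopic rel `{θ}` :
    (hhtpg : ∃ G : ↥(tailSet n m) × I → X, Continuous G ∧
      (∀ s, G (s, 0) = g s) ∧ (∀ s, G (s, 1) = g' s) ∧
      (∀ t : I, G (⟨theta n, theta_mem_tailSet n m⟩, t) = x₀))
    (f f' : ↥(hawaiianSet n) → X)
    (hres : ∀ (k : ℕ), k < m → ∀ (r : EuclideanSpace ℝ (Fin (n+1))) (hr : r ∈ sphereSet n k),
      f ⟨r, sphereSet_subset n k hr⟩ = fk k ⟨r, hr⟩)
    (hres' : ∀ (k : ℕ), k < m → ∀ (r : EuclideanSpace ℝ (Fin (n+1))) (hr : r ∈ sphereSet n k),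
      f' ⟨r, sphereSet_subset n k hr⟩ = f'k k ⟨r, hr⟩)
    (hrestail : ∀ (r : EuclideanSpace ℝ (Fin (n+1))) (hr : r ∈ tailSet n m),
      f ⟨r, tailSet_subset n m hr⟩ = g ⟨r, hr⟩)
    (hrestail' : ∀ (r : EuclideanSpace ℝ (Fin (n+1))) (hr : r ∈ tailSet n m),
      f' ⟨r, tailSet_subset n m hr⟩ = g' ⟨r, hr⟩) :
    Continuous f ∧ Continuous f' ∧
      ∃ H : ↥(hawaiianSet n) × I → X, Continuous H ∧
        (∀ s, H (s, 0) = f s) ∧ (∀ s, H (s, 1) = f' s) ∧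
        (∀ t : I, H (thetaPt n, t) = x₀) := by
  obtain ⟨G, hGc, hG0, hG1, hGθ⟩ := hhtpg
  choose K hKc hK0 hK1 hKθ using hhtpk
  obtain ⟨H, hHc, hH⟩ := exists_continuous_glue_wedgePiece x₀
    (fun | none => G | some k => K k k.2)
    (by rintro (_ | k); exacts [hGc, hKc k k.2])
    (by rintro (_ | k) _ t; exacts [hGθ t, hKθ k k.2 t])
  have hH0 : ∀ s, H (s, 0) = f s := by
    intro s
    obtain ⟨_ | k, hs⟩ := exists_mem_wedgePiece m s
    · exact (hH none s hs 0).trans <| (hG0 _).trans (hrestail _ hs).symm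
    · exact (hH (some k) s hs 0).trans <| (hK0 k k.2 _).trans (hres k k.2 _ hs).symm
  have hH1 : ∀ s, H (s, 1) = f' s := by
    intro s
    obtain ⟨_ | k, hs⟩ := exists_mem_wedgePiece m s
    · exact (hH none s hs 1).trans <| (hG1 _).trans (hrestail' _ hs).symm
    · exact (hH (some k) s hs 1).trans <| (hK1 k k.2 _).trans (hres' k k.2 _ hs).symm
  refine ⟨funext hH0 ▸ hHc.comp (Continuous.prodMk_left 0),
    funext hH1 ▸ hHc.comp (Continuous.prodMk_left 1), H, hHc, hH0, hH1, fun t => ?_⟩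
  exact (hH none (thetaPt n) (theta_mem_tailSet n m) t).trans (hGθ t)

/-- Gluing finitely many homotopic pairs `fₖ ≃ f'ₖ` (`k = 1, …, m`) with a
pair of homotopic (rel `{θ}`) maps `g ≃ g'` on the tail `⋁̃_{k ≥ m+1} Sₖⁿ` produces
continuous maps `f, f' : (ℍⁿ, θ) → (X, x₀)` that are homotopic rel `{θ}`. -/
theorem hawaiian_glued_homotopic_of_finitely_many
    (n : ℕ) (hn : 1 ≤ n) (m : ℕ) (X : Type*) [TopologicalSpace X] (x₀ : X)
    (fk f'k : ∀ k : ℕ, ↥(sphereSet n k) → X)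
    (hcont : ∀ k, k < m → Continuous (fk k)) (hcont' : ∀ k, k < m → Continuous (f'k k))
    (hpt : ∀ k, k < m → fk k ⟨theta n, theta_mem_sphereSet n k⟩ = x₀)
    (hpt' : ∀ k, k < m → f'k k ⟨theta n, theta_mem_sphereSet n k⟩ = x₀)
    -- each `fₖ` is homotopic to `f'ₖ` rel `{θ}` :
    (hhtpk : ∀ k, k < m → ∃ K : ↥(sphereSet n k) × I → X, Continuous K ∧
      (∀ s, K (s, 0) = fk k s) ∧ (∀ s, K (s, 1) = f'k k s) ∧
      (∀ t : I, K (⟨theta n, theta_mem_sphereSet n k⟩, t) = x₀))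
    (g g' : ↥(tailSet n m) → X)
    (hgcont : Continuous g) (hg'cont : Continuous g')
    (hgpt : g ⟨theta n, theta_mem_tailSet n m⟩ = x₀)
    (hg'pt : g' ⟨theta n, theta_mem_tailSet n m⟩ = x₀)
    -- `g` and `g'` are homotopic rel `{θ}` :
    (hhtpg : ∃ G : ↥(tailSet n m) × I → X, Continuous G ∧
      (∀ s, G (s, 0) = g s) ∧ (∀ s, G (s, 1) = g' s) ∧
      (∀ t : I, G (⟨theta n, theta_mem_tailSet n m⟩, t) = x₀))
    (f f' : ↥(hawaiianSet n) → X)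
    (hres : ∀ (k : ℕ), k < m → ∀ (r : EuclideanSpace ℝ (Fin (n+1))) (hr : r ∈ sphereSet n k),
      f ⟨r, sphereSet_subset n k hr⟩ = fk k ⟨r, hr⟩)
    (hres' : ∀ (k : ℕ), k < m → ∀ (r : EuclideanSpace ℝ (Fin (n+1))) (hr : r ∈ sphereSet n k),
      f' ⟨r, sphereSet_subset n k hr⟩ = f'k k ⟨r, hr⟩)
    (hrestail : ∀ (r : EuclideanSpace ℝ (Fin (n+1))) (hr : r ∈ tailSet n m),
      f ⟨r, tailSet_subset n m hr⟩ = g ⟨r, hr⟩)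
    (hrestail' : ∀ (r : EuclideanSpace ℝ (Fin (n+1))) (hr : r ∈ tailSet n m),
      f' ⟨r, tailSet_subset n m hr⟩ = g' ⟨r, hr⟩) :
    Continuous f ∧ Continuous f' ∧
      ∃ H : ↥(hawaiianSet n) × I → X, Continuous H ∧
        (∀ s, H (s, 0) = f s) ∧ (∀ s, H (s, 1) = f' s) ∧
        (∀ t : I, H (thetaPt n, t) = x₀) :=
  hawaiian_glued_homotopic_of_finitely_many_general n m X x₀ fk f'k hhtpk g g' hhtpg f f' hres hres'
    hrestail hrestail'

end HG
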